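/- arXiv:2410.21612 — 4 statements merged into one kernel-verified Lean document; each statement's English description precedes it below -/
import Mathlib

section
/- Let L/K be the Artin-Schreier extension generated by a root x of X^p − X − α where α ∈ K is optimal. If v(α) < 0 and gcd(v(α), p) = 1, then L/K is wildly ramified, i.e., the value group of L equals (1/p)·Γ_K. -/
/-!
Since `v(α) = N < 0`, the root `x` must have negative value, so `x ^ p` dominates `x ^ p - x = α`
and `w(x) = N / p`. As `gcd(N, p) = 1`, the values of the terms `c i • x ^ i` (`i < p`) lie in the
pairwise distinct cosets `i N / p + ℤ`, hence the value of a sum `∑ i < p, c i • x ^ i` (which is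
every element of `L = K[x]`) is the least of them, in `(1/p)ℤ`. Conversely, writing
`j = a N + b p` by Bézout, `w(c x ^ a) = j / p` for any `c` with `v(c) = b`.
-/

open Polynomial

theorem Nat.eq_of_intCast_add_mul_div_eq {p : ℕ} {N m m' : ℤ} {i j : ℕ} (hcop : Int.gcd N p = 1)
    (hi : i < p) (hj : j < p) (h : (m : ℚ) + i * (N / p) = m' + j * (N / p)) : i = j := by
  have hp : (p : ℚ) ≠ 0 := Nat.cast_ne_zero.mpr (by omega)
  have hdvd : (p : ℤ) ∣ (j - i) * N := by
    refine ⟨m - m', ?_⟩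
    field_simp at h
    exact_mod_cast (by linarith : ((j - i) * N : ℚ) = p * (m - m'))
  have hmod : (i : ℤ) ≡ j [ZMOD p] :=
    Int.modEq_iff_dvd.mpr ((Int.isCoprime_iff_gcd_eq_one.mpr hcop).symm.dvd_of_dvd_mul_right hdvd)
  exact (Int.natCast_modEq_iff.mp hmod).eq_of_lt_of_lt hi hj

theorem Int.exists_natCast_mul_add_mul_eq {N : ℤ} {p : ℕ} (hp : 0 < p) (hcop : Int.gcd N p = 1)
    (j : ℤ) : ∃ (a : ℕ) (b : ℤ), a * N + b * p = j := by
  have hbez : N * Int.gcdA N p + p * Int.gcdB N p = 1 := by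
    have := Int.gcd_eq_gcd_ab N p
    rw [hcop] at this
    exact_mod_cast this.symm
  set u := j * Int.gcdA N p
  -- shifting the Bézout solution `(u, j gcdB)` by `|u| • (p, -N)` makes its first entry nonnegative
  have hpos : 0 ≤ u + |u| * p := by
    have : (1 : ℤ) ≤ p := by exact_mod_cast hp
    nlinarith [abs_nonneg u, neg_abs_le u]
  lift u + |u| * p to ℕ using hpos with a ha
  refine ⟨a, j * Int.gcdB N p - |u| * N, ?_⟩
  rw [ha]
  linear_combination j * hbez

namespace Polynomial

theorem monic_X_pow_sub_X_sub_C {R : Type*} [CommRing R] {n : ℕ} (hn : 1 < n) (a : R) :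
    (X ^ n - X - C a).Monic := by
  rw [sub_sub]
  exact monic_X_pow_sub (by compute_degree!)

theorem natDegree_X_pow_sub_X_sub_C {R : Type*} [CommRing R] [Nontrivial R] {n : ℕ}
    (hn : 1 < n) (a : R) : (X ^ n - X - C a).natDegree = n := by
  rw [sub_sub, natDegree_sub_eq_left_of_natDegree_lt] <;> compute_degree!

end Polynomial

theorem Algebra.exists_sum_smul_pow_eq_of_mem_adjoin_singleton {K L : Type*} [CommRing K]
    [Ring L] [Algebra K L] {P : K[X]} (hP : P.Monic) (hP1 : P ≠ 1) {x : L} (hx : aeval x P = 0)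
    {y : L} (hy : y ∈ Algebra.adjoin K {x}) :
    ∃ c : ℕ → K, ∑ i ∈ Finset.range P.natDegree, c i • x ^ i = y := by
  rw [Algebra.adjoin_singleton_eq_range_aeval] at hy
  obtain ⟨g, rfl⟩ := hy
  refine ⟨(g %ₘ P).coeff, ?_⟩
  rw [← aeval_eq_sum_range' (natDegree_modByMonic_lt g hP hP1), aeval_modByMonic_eq_self_of_root hx]
  rfl

namespace AddValuation

section Ring

variable {R Γ : Type*} [Ring R] [LinearOrderedAddCommMonoidWithTop Γ] (v : AddValuation R Γ)

theorem map_sum_eq_of_lt {ι : Type*} [DecidableEq ι] {s : Finset ι} {f : ι → R} {j : ι}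
    (hj : j ∈ s) (hf : ∀ i ∈ s \ {j}, v (f j) < v (f i)) :
    v (∑ i ∈ s, f i) = v (f j) :=
  Valuation.map_sum_eq_of_lt (v := toValuation v) hj hf

theorem exists_map_sum_eq_of_injOn {ι : Type*} {s : Finset ι} (hs : s.Nonempty) (f : ι → R)
    (hf : ∀ i ∈ s, ∀ j ∈ s, v (f i) = v (f j) → v (f i) ≠ ⊤ → i = j) :
    ∃ j ∈ s, v (∑ i ∈ s, f i) = v (f j) := by
  classical
  obtain ⟨j, hj, hmin⟩ := s.exists_min_image (fun i => v (f i)) hs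
  refine ⟨j, hj, ?_⟩
  by_cases htop : v (f j) = ⊤
  · rw [htop, ← top_le_iff]
    exact v.map_le_sum fun i hi => htop ▸ hmin i hi
  · refine v.map_sum_eq_of_lt hj fun i hi => ?_
    obtain ⟨hi, hij⟩ := Finset.mem_sdiff.mp hi
    exact (hmin i hi).lt_of_ne fun h => Finset.notMem_singleton.mp hij (hf j hj i hi h htop).symm

end Ring

theorem map_eq_div_of_pow_sub_self_eq {L : Type*} [Field L] (w : AddValuation L (WithTop ℚ))
    {n : ℕ} (hn : 1 < n) {x : L} {a : ℚ} (h : w (x ^ n - x) = a) (ha : a < 0) :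
    w x = ((a / n : ℚ) : WithTop ℚ) := by
  have hx0 : x ≠ 0 := by
    rintro rfl
    simp [zero_pow (by omega : n ≠ 0)] at h
  obtain ⟨r, hr⟩ := WithTop.ne_top_iff_exists.mp ((w.ne_top_iff).mpr hx0)
  have hpow : w (x ^ n) = ((n * r : ℚ) : WithTop ℚ) := by
    rw [map_pow, ← hr, ← WithTop.coe_nsmul, nsmul_eq_mul]
  have hr0 : r < 0 := by
    by_contra! hr0
    have : ((0 : ℚ) : WithTop ℚ) ≤ a := by
      rw [← h]
      refine w.map_le_sub ?_ ?_
      · rw [hpow]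
        exact_mod_cast mul_nonneg n.cast_nonneg hr0
      · rw [← hr]
        exact_mod_cast hr0
    exact (WithTop.coe_le_coe.mp this).not_gt ha
  have hlt : (n : ℚ) * r < r := by
    have : (1 : ℚ) < n := by exact_mod_cast hn
    nlinarith
  have hdom : ((n * r : ℚ) : WithTop ℚ) = a := by
    rw [← hpow, ← h, w.map_sub_eq_of_lt_left (by rw [hpow, ← hr]; exact_mod_cast hlt)]
  rw [← hr, WithTop.coe_eq_coe, ← WithTop.coe_eq_coe.mp hdom]
  field_simp

end AddValuation

section ValueGroup

variable {K L : Type*} [Field K] [Field L] [Algebra K L] (w : AddValuation L (WithTop ℚ))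
  (v : K → WithTop ℤ)

theorem exists_map_smul_pow_eq
    (hcomp : ∀ c : K, w (algebraMap K L c) = WithTop.map (fun j : ℤ => (j : ℚ)) (v c))
    {x : L} {r : ℚ} (hx : w x = r) {c : K} {i : ℕ} (h : w (c • x ^ i) ≠ ⊤) :
    ∃ m : ℤ, w (c • x ^ i) = ((m + i * r : ℚ) : WithTop ℚ) := by
  have hval : w (c • x ^ i) =
      WithTop.map (fun j : ℤ => (j : ℚ)) (v c) + ((i * r : ℚ) : WithTop ℚ) := by
    rw [Algebra.smul_def, w.map_mul, hcomp, w.map_pow, hx, ← WithTop.coe_nsmul, nsmul_eq_mul]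
  cases hc : v c with
  | top => simp [hval, hc] at h
  | coe m => exact ⟨m, by rw [hval, hc, WithTop.map_coe, ← WithTop.coe_add]⟩

theorem exists_map_sum_eq_intCast_div {p : ℕ} (hp : 0 < p) {N : ℤ} (hcop : Int.gcd N p = 1)
    (hcomp : ∀ c : K, w (algebraMap K L c) = WithTop.map (fun j : ℤ => (j : ℚ)) (v c))
    {x : L} (hx : w x = ((N / p : ℚ) : WithTop ℚ)) (c : ℕ → K)
    (hy : w (∑ i ∈ Finset.range p, c i • x ^ i) ≠ ⊤) :
    ∃ j : ℤ, w (∑ i ∈ Finset.range p, c i • x ^ i) = ((j / p : ℚ) : WithTop ℚ) := by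
  have hdistinct : ∀ i ∈ Finset.range p, ∀ j ∈ Finset.range p,
      w (c i • x ^ i) = w (c j • x ^ j) → w (c i • x ^ i) ≠ ⊤ → i = j := by
    intro i hi j hj heq htop
    obtain ⟨m, hm⟩ := exists_map_smul_pow_eq w v hcomp hx htop
    obtain ⟨m', hm'⟩ := exists_map_smul_pow_eq w v hcomp hx (heq ▸ htop)
    rw [hm, hm', WithTop.coe_eq_coe] at heq
    exact Nat.eq_of_intCast_add_mul_div_eq hcop (Finset.mem_range.mp hi) (Finset.mem_range.mp hj)
      heq
  obtain ⟨i, -, hi⟩ := w.exists_map_sum_eq_of_injOn ⟨0, Finset.mem_range.mpr hp⟩ _ hdistinct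
  obtain ⟨m, hm⟩ := exists_map_smul_pow_eq w v hcomp hx (hi ▸ hy)
  refine ⟨m * p + i * N, ?_⟩
  rw [hi, hm, WithTop.coe_eq_coe]
  have : (p : ℚ) ≠ 0 := Nat.cast_ne_zero.mpr hp.ne'
  push_cast
  field_simp

theorem exists_map_eq_intCast_div {p : ℕ} (hp : 0 < p) {N : ℤ} (hcop : Int.gcd N p = 1)
    (hcomp : ∀ c : K, w (algebraMap K L c) = WithTop.map (fun j : ℤ => (j : ℚ)) (v c))
    (hvsurj : ∀ j : ℤ, ∃ c : K, v c = (j : WithTop ℤ))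
    {x : L} (hx : w x = ((N / p : ℚ) : WithTop ℚ)) (j : ℤ) :
    ∃ y : L, w y = ((j / p : ℚ) : WithTop ℚ) := by
  obtain ⟨a, b, hab⟩ := Int.exists_natCast_mul_add_mul_eq hp hcop j
  obtain ⟨c, hc⟩ := hvsurj b
  refine ⟨algebraMap K L c * x ^ a, ?_⟩
  rw [w.map_mul, hcomp, hc, w.map_pow, hx, WithTop.map_coe, ← WithTop.coe_nsmul,
    ← WithTop.coe_add, WithTop.coe_eq_coe, ← hab, nsmul_eq_mul]
  have : (p : ℚ) ≠ 0 := Nat.cast_ne_zero.mpr hp.ne'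
  push_cast
  field_simp
  ring

end ValueGroup

theorem artinSchreier_wildly_ramified_general
    {K L : Type*} [Field K] [Field L] [Algebra K L]
    (p : ℕ) [Fact p.Prime]
    (v : K → WithTop ℤ)
    (hvsurj : ∀ j : ℤ, ∃ x : K, v x = (j : WithTop ℤ))
    (α : K)
    (x : L) (hx : x ^ p - x = algebraMap K L α)
    (hgen : Algebra.adjoin K {x} = ⊤)
    (w : L → WithTop ℚ)
    (hw0 : w 0 = ⊤) (hw1 : w 1 = 0)
    (hwmul : ∀ x y : L, w (x * y) = w x + w y)
    (hwadd : ∀ x y : L, min (w x) (w y) ≤ w (x + y))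
    (hcomp : ∀ y : K, w (algebraMap K L y) = WithTop.map (fun j : ℤ => (j : ℚ)) (v y))
    (N : ℤ) (hval : v α = (N : WithTop ℤ)) (hneg : N < 0) (hcop : Int.gcd N p = 1) :
    ∀ q : ℚ, (∃ y : L, y ≠ 0 ∧ w y = (q : WithTop ℚ)) ↔ ∃ j : ℤ, q = (j : ℚ) / p := by
  intro q
  let W := AddValuation.of w hw0 hw1 hwadd hwmul
  have hp : p.Prime := Fact.out
  have hα : W (x ^ p - x) = (N : ℚ) := by
    rw [AddValuation.of_apply, hx, hcomp, hval, WithTop.map_coe]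
  have hxval : W x = ((N / p : ℚ) : WithTop ℚ) :=
    AddValuation.map_eq_div_of_pow_sub_self_eq W hp.one_lt hα (by exact_mod_cast hneg)
  constructor
  · rintro ⟨y, -, hyq⟩
    change W y = q at hyq
    set P := X ^ p - X - C α
    have hPdeg : P.natDegree = p := natDegree_X_pow_sub_X_sub_C hp.one_lt α
    have hPx : aeval x P = 0 := by simp only [P, map_sub, map_pow, aeval_X, aeval_C, hx, sub_self]
    obtain ⟨c, rfl⟩ := Algebra.exists_sum_smul_pow_eq_of_mem_adjoin_singleton
      (monic_X_pow_sub_X_sub_C hp.one_lt α)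
      (ne_of_apply_ne natDegree (by rw [hPdeg, natDegree_one]; exact hp.ne_zero))
      hPx (hgen ▸ Algebra.mem_top : y ∈ Algebra.adjoin K {x})
    rw [hPdeg] at hyq
    obtain ⟨j, hj⟩ := exists_map_sum_eq_intCast_div W v hp.pos hcop hcomp hxval c
      (hyq ▸ WithTop.coe_ne_top)
    exact ⟨j, WithTop.coe_injective (hyq.symm.trans hj)⟩
  · rintro ⟨j, rfl⟩
    obtain ⟨y, hy⟩ := exists_map_eq_intCast_div W v hp.pos hcop hcomp hvsurj hxval j
    exact ⟨y, fun h0 => by simp [h0] at hy, hy⟩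

/-- Let `K` be a discrete valued field of characteristic `p` with
valuation `v` of value group `ℤ`, and let `α ∈ K` be *optimal* (either `v(α) > 0` or
`v(α + γ^p − γ) ≤ v(α)` for all `γ`, i.e. `v(α)` realizes the supremum over the
Artin-Schreier coset) with `α ∉ 𝒫(K)`.  Let `L = K[x]/(x^p − x − α)` be the
Artin-Schreier extension generated by a root `x`, with a valuation `w` extending `v`.
If `v(α) < 0` and `gcd(v(α), p) = 1`, then `L/K` is wildly ramified: the value group of
`L` equals `(1/p)·Γ_K = (1/p)ℤ`. -/
theorem artinSchreier_wildly_ramified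
    {K L : Type*} [Field K] [Field L] [Algebra K L]
    (p : ℕ) [Fact p.Prime] [CharP K p]
    (v : K → WithTop ℤ)
    (hv0 : v 0 = ⊤) (hv1 : v 1 = 0)
    (hvmul : ∀ x y : K, v (x * y) = v x + v y)
    (hvadd : ∀ x y : K, min (v x) (v y) ≤ v (x + y))
    (hvsurj : ∀ j : ℤ, ∃ x : K, v x = (j : WithTop ℤ))
    (α : K) (hAS : ∀ γ : K, γ ^ p - γ ≠ α)
    (hopt : 0 < v α ∨ ∀ γ : K, v (α + (γ ^ p - γ)) ≤ v α)
    (x : L) (hx : x ^ p - x = algebraMap K L α)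
    (hgen : Algebra.adjoin K {x} = ⊤) (hdeg : Module.finrank K L = p)
    (w : L → WithTop ℚ)
    (hw0 : w 0 = ⊤) (hw1 : w 1 = 0)
    (hwmul : ∀ x y : L, w (x * y) = w x + w y)
    (hwadd : ∀ x y : L, min (w x) (w y) ≤ w (x + y))
    (hcomp : ∀ y : K, w (algebraMap K L y) = WithTop.map (fun j : ℤ => (j : ℚ)) (v y))
    (N : ℤ) (hval : v α = (N : WithTop ℤ)) (hneg : N < 0) (hcop : Int.gcd N p = 1) :
    ∀ q : ℚ, (∃ y : L, y ≠ 0 ∧ w y = (q : WithTop ℚ)) ↔ ∃ j : ℤ, q = (j : ℚ) / p :=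
  artinSchreier_wildly_ramified_general p v hvsurj α x hx hgen w hw0 hw1 hwmul hwadd hcomp N hval
    hneg hcop
end

section
/- Let K be a discrete valued field of characteristic p with uniformizer t and residue field k, and let L/K be the Artin-Schreier extension generated by x with x^p − x = u/t^{p^l}, where l ≥ 1 is an integer and u ∈ O_K^×. Then, setting y = t^{p^{l−1}} x, one has y^p − t^{p^l − p^{l−1}} y = u, so ȳ = ū^{1/p} in the residue field; hence if ū ∉ k^p, the extension L/K is ferociously ramified with residue extension k(ū^{1/p}). -/
open Polynomial

section ASHelpers

variable {F : Type*} [Field F] {G : Type*} [AddCommGroup G] [LinearOrder G] [IsOrderedAddMonoid G] {w : F → WithTop G}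

theorem ASaux.ne_top (hw1 : w 1 = 0) (hwmul : ∀ a b : F, w (a * b) = w a + w b)
    {a : F} (ha : a ≠ 0) : w a ≠ ⊤ := by
  intro h
  have h2 := hwmul a a⁻¹
  rw [mul_inv_cancel₀ ha, hw1, h, top_add] at h2
  simp at h2

theorem ASaux.neg (hw1 : w 1 = 0) (hwmul : ∀ a b : F, w (a * b) = w a + w b) (a : F) :
    w (-a) = w a := by
  have h1 : w (-1 : F) + w (-1 : F) = 0 := by
    rw [← hwmul, neg_one_mul, neg_neg, hw1]
  have h2 : w (-1 : F) = 0 := by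
    rcases eq_or_ne (w (-1 : F)) ⊤ with hc | hc
    · rw [hc, top_add] at h1; simp at h1
    · obtain ⟨g, hg⟩ := WithTop.ne_top_iff_exists.mp hc
      rw [← hg] at h1 ⊢
      have hgg : g + g = 0 := by exact_mod_cast h1
      have hg0 : g = 0 := by
        rcases lt_trichotomy g 0 with h | h | h
        · exact absurd hgg (by have := add_lt_add h h; simpa using this.ne)
        · exact h
        · exact absurd hgg (by have := add_lt_add h h; simpa using this.ne')
      exact_mod_cast hg0
  calc w (-a) = w ((-1) * a) := by rw [neg_one_mul]
  _ = w (-1) + w a := hwmul _ _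
  _ = w a := by rw [h2, zero_add]

theorem ASaux.add_eq_left (hw1 : w 1 = 0) (hwmul : ∀ a b : F, w (a * b) = w a + w b)
    (hwadd : ∀ a b : F, min (w a) (w b) ≤ w (a + b)) {a b : F} (h : w a < w b) :
    w (a + b) = w a := by
  have h1 : w a ≤ w (a + b) := by
    have := hwadd a b
    rwa [min_eq_left h.le] at this
  have h2 : min (w (a + b)) (w b) ≤ w a := by
    have h3 := hwadd (a + b) (-b)
    rwa [ASaux.neg hw1 hwmul, add_neg_cancel_right] at h3
  rcases le_total (w (a + b)) (w b) with hle | hle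
  · exact le_antisymm (by rwa [min_eq_left hle] at h2) h1
  · rw [min_eq_right hle] at h2
    exact absurd h (not_lt.mpr h2)

theorem ASaux.pow (hw1 : w 1 = 0) (hwmul : ∀ a b : F, w (a * b) = w a + w b) (a : F) :
    ∀ n : ℕ, w (a ^ n) = n • w a
  | 0 => by rw [pow_zero, hw1, zero_smul]
  | (n + 1) => by rw [pow_succ, hwmul, ASaux.pow hw1 hwmul a n, succ_nsmul]

theorem ASaux.nsmul_coe (n : ℕ) (c : G) :
    n • ((c : WithTop G)) = ((n • c : G) : WithTop G) := by
  induction n with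
  | zero => simp
  | succ m ih => rw [succ_nsmul, succ_nsmul, ih, WithTop.coe_add]

theorem ASaux.add_eq_zero {g : G} {x : WithTop G}
    (h : (g : WithTop G) + x = 0) : x = ((-g : G) : WithTop G) := by
  induction x using WithTop.recTopCoe with
  | top => simp at h
  | coe y =>
    have hy : g + y = 0 := by exact_mod_cast h
    exact_mod_cast eq_neg_of_add_eq_zero_right hy

theorem ASaux.map_nonneg {a : WithTop ℤ} (h : 0 ≤ a) :
    0 ≤ WithTop.map (fun j : ℤ => (j : ℚ)) a := by
  induction a using WithTop.recTopCoe with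
  | top => simp
  | coe j =>
    rw [WithTop.map_coe]
    have hj : (0 : ℤ) ≤ j := by exact_mod_cast h
    exact_mod_cast (by exact_mod_cast hj : (0:ℚ) ≤ (j:ℚ))

end ASHelpers



/-- Let `K` be a discrete valued field of characteristic `p` with
uniformizer `t` and residue field `k`, let `u ∈ O_K^×` be a unit whose residue `ū` is
not a `p`-th power in `k`, let `l ≥ 1`, and let `L = K[x]/(x^p − x − u/t^{p^l})`
(assumed irreducible) with a valuation extending `v`, valuation ring `O_L` and residue
field `l_L`.  Then `y := t^{p^{l−1}}·x` satisfies `y^p − t^{p^l − p^{l−1}}·y = u`, `y`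
is a unit of `O_L` with `ȳ^p = ū` (i.e. `ȳ = ū^{1/p}`), and `L/K` is ferociously
ramified: the residue extension `l_L/k = k(ū^{1/p})/k` is purely inseparable of
degree `p`. -/
theorem artinSchreier_ferociously_ramified
    {K L : Type*} [Field K] [Field L] [Algebra K L]
    (p : ℕ) [Fact p.Prime] [CharP K p]
    (v : K → WithTop ℤ)
    (hv0 : v 0 = ⊤) (hv1 : v 1 = 0)
    (hvmul : ∀ x y : K, v (x * y) = v x + v y)
    (hvadd : ∀ x y : K, min (v x) (v y) ≤ v (x + y))
    (hvsurj : ∀ j : ℤ, ∃ x : K, v x = (j : WithTop ℤ))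
    (OK : Subring K) (hOK : ∀ x : K, x ∈ OK ↔ 0 ≤ v x)
    {k : Type*} [Field k] (resK : OK →+* k)
    (hresKsurj : Function.Surjective resK)
    (hresKker : ∀ x : OK, resK x = 0 ↔ 0 < v (x : K))
    (t : K) (ht : v t = (1 : ℤ))
    (u : OK) (hu : IsUnit u) (hubar : ∀ c : k, c ^ p ≠ resK u)
    (l : ℕ) (hl : 1 ≤ l)
    (hirr : Irreducible (Polynomial.X ^ p - Polynomial.X
      - Polynomial.C ((u : K) / t ^ p ^ l) : Polynomial K))
    (x : L) (hx : x ^ p - x = algebraMap K L ((u : K) / t ^ p ^ l))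
    (hgen : Algebra.adjoin K {x} = ⊤) (hdeg : Module.finrank K L = p)
    (w : L → WithTop ℚ)
    (hw0 : w 0 = ⊤) (hw1 : w 1 = 0)
    (hwmul : ∀ x y : L, w (x * y) = w x + w y)
    (hwadd : ∀ x y : L, min (w x) (w y) ≤ w (x + y))
    (hcomp : ∀ y : K, w (algebraMap K L y) = WithTop.map (fun j : ℤ => (j : ℚ)) (v y))
    (OL : Subring L) (hOL : ∀ y : L, y ∈ OL ↔ 0 ≤ w y)
    {lL : Type*} [Field lL] (resL : OL →+* lL)
    (hresLsurj : Function.Surjective resL)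
    (hresLker : ∀ y : OL, resL y = 0 ↔ 0 < w (y : L))
    [Algebra k lL]
    (hrescomp : ∀ (y : OK) (hy : algebraMap K L (y : K) ∈ OL),
      algebraMap k lL (resK y) = resL ⟨algebraMap K L (y : K), hy⟩) :
    -- the identity `y^p − t^{p^l − p^{l−1}}·y = u` for `y = t^{p^{l−1}}·x`
    (algebraMap K L t ^ p ^ (l - 1) * x) ^ p
        - algebraMap K L t ^ (p ^ l - p ^ (l - 1)) * (algebraMap K L t ^ p ^ (l - 1) * x)
      = algebraMap K L (u : K) ∧
    -- `y` lies in `O_L`, is a unit there, and its residue is `ū^{1/p}`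
    (∃ yo : OL, (yo : L) = algebraMap K L t ^ p ^ (l - 1) * x ∧ IsUnit yo ∧
      resL yo ^ p = algebraMap k lL (resK u)) ∧
    -- `L/K` is ferociously ramified: `l_L/k` purely inseparable of degree `p`
    IsPurelyInseparable k lL ∧ Module.finrank k lL = p := by

  classical
  have hp : p.Prime := Fact.out
  have hppos : 0 < p := hp.pos
  have htne : t ≠ 0 := by
    intro h; rw [h, hv0] at ht; exact absurd ht (by simp)
  set T := algebraMap K L t with hT
  have hTne : T ≠ 0 := by
    simpa [hT] using (map_ne_zero (algebraMap K L)).mpr htne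
  have hplmul : p ^ (l - 1) * p = p ^ l := by
    rw [← pow_succ]; congr 1; omega
  have hple : p ^ (l - 1) < p ^ l := Nat.pow_lt_pow_right hp.one_lt (by omega)
  have htpne : t ^ p ^ l ≠ 0 := pow_ne_zero _ htne
  set N := p ^ l - p ^ (l - 1) with hN
  have hNpos : 0 < N := by omega
  set y : L := T ^ p ^ (l - 1) * x with hy
  -- Part 1 : the algebraic identity
  have key1 : y ^ p - T ^ N * y = algebraMap K L (u : K) := by
    have h1 : y ^ p = T ^ p ^ l * x ^ p := by
      rw [hy, mul_pow, ← pow_mul, hplmul]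
    have h2 : T ^ N * y = T ^ p ^ l * x := by
      rw [hy, ← mul_assoc, ← pow_add]
      congr 2
      omega
    rw [h1, h2, ← mul_sub, hx, hT, ← map_pow, ← map_mul]
    congr 1
    rw [mul_comm, div_mul_cancel₀ _ htpne]
  -- basic valuation facts
  have hwneg := ASaux.neg hw1 hwmul
  obtain ⟨u', huu'⟩ := hu.exists_right_inv
  have hvu : v (u : K) = 0 := by
    have hKuu' : (u : K) * (u' : K) = 1 := by
      have := congrArg (fun z : OK => (z : K)) huu'
      push_cast at this
      exact this
    have h1 : v (u : K) + v (u' : K) = 0 := by rw [← hvmul, hKuu', hv1]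
    have h2 : (0 : WithTop ℤ) ≤ v (u : K) := (hOK _).mp u.2
    have h3 : (0 : WithTop ℤ) ≤ v (u' : K) := (hOK _).mp u'.2
    refine le_antisymm ?_ h2
    calc v (u : K) ≤ v (u : K) + v (u' : K) := le_add_of_nonneg_right h3
    _ = 0 := h1
  have hwu : w (algebraMap K L (u : K)) = 0 := by
    rw [hcomp, hvu, ← WithTop.coe_zero, WithTop.map_coe]
    simp
  have hwT : w T = ((1 : ℚ) : WithTop ℚ) := by
    rw [hT, hcomp, ht, WithTop.map_coe]
    simp
  have hwTpow : ∀ n : ℕ, w (T ^ n) = ((n : ℚ) : WithTop ℚ) := by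
    intro n
    rw [ASaux.pow hw1 hwmul, hwT, ASaux.nsmul_coe]
    norm_cast
    simp [nsmul_eq_mul]
  have hws : w (T ^ N) = ((N : ℚ) : WithTop ℚ) := hwTpow N
  have hNQ : (0 : ℚ) < (N : ℚ) := by exact_mod_cast hNpos
  have hwspos : (0 : WithTop ℚ) < w (T ^ N) := by
    rw [hws]
    exact_mod_cast hNQ
  have hnsmulpos : ∀ (n : ℕ), n ≠ 0 → ∀ a : WithTop ℚ, 0 < a → 0 < n • a := by
    intro n hn a ha
    obtain ⟨m, rfl⟩ := Nat.exists_eq_succ_of_ne_zero hn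
    rw [succ_nsmul]
    calc (0 : WithTop ℚ) < a := ha
    _ ≤ m • a + a := le_add_of_nonneg_left (nsmul_nonneg ha.le m)
  -- w y = 0
  have hwy : w y = 0 := by
    rcases lt_trichotomy (w y) 0 with hlt | he | hgt
    · exfalso
      have hyne : w y ≠ ⊤ := fun h => by rw [h] at hlt; exact absurd hlt (by simp)
      obtain ⟨c, hc⟩ := WithTop.ne_top_iff_exists.mp hyne
      have hcneg : c < 0 := by
        rw [← hc] at hlt
        exact_mod_cast hlt
      have hwyp : w (y ^ p) = (((p : ℚ) * c : ℚ) : WithTop ℚ) := by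
        rw [ASaux.pow hw1 hwmul, ← hc, ASaux.nsmul_coe, nsmul_eq_mul]
      have hwsy : w (T ^ N * y) = (((N : ℚ) + c : ℚ) : WithTop ℚ) := by
        rw [hwmul, hws, ← hc, ← WithTop.coe_add]
      have hp2 : (2 : ℚ) ≤ (p : ℚ) := by exact_mod_cast hp.two_le
      have hlt2 : w (y ^ p) < w (T ^ N * y) := by
        rw [hwyp, hwsy]
        exact_mod_cast (by nlinarith : (p : ℚ) * c < (N : ℚ) + c)
      have heq2 : w (y ^ p - T ^ N * y) = w (y ^ p) := by
        rw [sub_eq_add_neg]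
        exact ASaux.add_eq_left hw1 hwmul hwadd (by rwa [hwneg])
      rw [key1, hwu, hwyp] at heq2
      have : (0 : ℚ) = (p : ℚ) * c := by exact_mod_cast heq2
      nlinarith
    · exact he
    · exfalso
      have h1 : 0 < w (y ^ p) := by
        rw [ASaux.pow hw1 hwmul]
        exact hnsmulpos p hp.ne_zero _ hgt
      have h2 : 0 < w (-(T ^ N * y)) := by
        rw [hwneg, hwmul]
        exact lt_of_lt_of_le hwspos (le_add_of_nonneg_right hgt.le)
      have h3 : 0 < w (y ^ p - T ^ N * y) := by
        rw [sub_eq_add_neg]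
        exact lt_of_lt_of_le (lt_min h1 h2) (hwadd _ _)
      rw [key1, hwu] at h3
      exact lt_irrefl _ h3
  -- y gives a unit of OL
  have hyOL : y ∈ OL := (hOL y).mpr (le_of_eq hwy.symm)
  have hyne0 : y ≠ 0 := by
    intro h; rw [h, hw0] at hwy; exact absurd hwy (by simp)
  have hwyinv : w y⁻¹ = 0 := by
    have h1 := hwmul y y⁻¹
    rw [mul_inv_cancel₀ hyne0, hw1, hwy, zero_add] at h1
    exact h1.symm
  have hyinvOL : y⁻¹ ∈ OL := (hOL _).mpr (le_of_eq hwyinv.symm)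
  have hyunit : IsUnit (⟨y, hyOL⟩ : OL) := by
    refine IsUnit.of_mul_eq_one ⟨y⁻¹, hyinvOL⟩ ?_
    exact Subtype.ext (by simpa using mul_inv_cancel₀ hyne0)
  -- residue of y
  have hsOL : (T ^ N : L) ∈ OL := (hOL _).mpr (by rw [hws]; exact_mod_cast hNQ.le)
  have huOL : algebraMap K L (u : K) ∈ OL := (hOL _).mpr (le_of_eq hwu.symm)
  have hyrel : y ^ p = algebraMap K L (u : K) + T ^ N * y := by
    rw [← key1]; ring
  have hrel : (⟨y, hyOL⟩ : OL) ^ p = ⟨algebraMap K L (u : K), huOL⟩ + ⟨T ^ N, hsOL⟩ * ⟨y, hyOL⟩ := by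
    apply Subtype.ext
    push_cast
    exact hyrel
  have hresy : resL ⟨y, hyOL⟩ ^ p = algebraMap k lL (resK u) := by
    rw [← map_pow, hrel, map_add, map_mul]
    have hso : resL ⟨T ^ N, hsOL⟩ = 0 := (hresLker _).mpr hwspos
    rw [hso, zero_mul, add_zero]
    exact (hrescomp u huOL).symm
  -- characteristic of the residue fields
  have hpOK : ((p : ℕ) : OK) = 0 := by
    apply Subtype.ext
    push_cast
    exact CharP.cast_eq_zero K p
  haveI hck : CharP k p := (CharP.charP_iff_prime_eq_zero hp).mpr
    (by rw [← map_natCast resK, hpOK, map_zero])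
  haveI hclL : CharP lL p := (CharP.charP_iff_prime_eq_zero hp).mpr
    (by rw [← map_natCast (algebraMap k lL), CharP.cast_eq_zero k p, map_zero])
  haveI : FiniteDimensional K L := Module.finite_of_finrank_pos (by rw [hdeg]; exact hppos)
  -- the residue extension has degree at most p
  have hbound : ∀ S : Finset lL, (LinearIndependent k fun i : S => (i : lL)) → S.card ≤ p := by
    intro S hS
    by_contra hcard
    push_neg at hcard
    have hzz : ∀ b : S, ∃ z : OL, resL z = (b : lL) := fun b => hresLsurj (b : lL)
    choose z hz using hzz
    have hdep : ¬ LinearIndependent K (fun b : S => (z b : L)) := by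
      intro hind
      have h1 := hind.fintype_card_le_finrank
      rw [hdeg, Fintype.card_coe] at h1
      omega
    rw [Fintype.not_linearIndependent_iff] at hdep
    obtain ⟨g, hgsum, i0, hgi0⟩ := hdep
    have hSne : (Finset.univ.filter (fun b : S => g b ≠ 0)).Nonempty := ⟨i0, by simp [hgi0]⟩
    obtain ⟨c, hcmem, hcmin⟩ := Finset.exists_min_image _ (fun b => v (g b)) hSne
    have hgc : g c ≠ 0 := by simpa using hcmem
    obtain ⟨m, hm⟩ := WithTop.ne_top_iff_exists.mp (ASaux.ne_top hv1 hvmul hgc)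
    have hvinv : v (g c)⁻¹ = ((-m : ℤ) : WithTop ℤ) := by
      apply ASaux.add_eq_zero (g := m)
      rw [hm, ← hvmul, mul_inv_cancel₀ hgc, hv1]
    have hmem : ∀ b : S, (0 : WithTop ℤ) ≤ v (g b / g c) := by
      intro b
      rcases eq_or_ne (g b) 0 with hb | hb
      · rw [hb, zero_div, hv0]; exact le_top
      · rw [div_eq_mul_inv, hvmul, hvinv]
        have h1 : ((m : ℤ) : WithTop ℤ) ≤ v (g b) := by
          rw [hm]; exact hcmin b (by simp [hb])
        calc (0 : WithTop ℤ) = ((m : ℤ) : WithTop ℤ) + ((-m : ℤ) : WithTop ℤ) := by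
              rw [← WithTop.coe_add]; simp
        _ ≤ v (g b) + ((-m : ℤ) : WithTop ℤ) := add_le_add_left h1 _
    have hmemL : ∀ b : S, algebraMap K L (g b / g c) ∈ OL := by
      intro b
      rw [hOL, hcomp]
      exact ASaux.map_nonneg (hmem b)
    have hsum' : ∑ b : S, (g b / g c) • (z b : L) = 0 := by
      have h2 : ∑ b : S, (g b / g c) • (z b : L) = (g c)⁻¹ • ∑ b : S, g b • (z b : L) := by
        rw [Finset.smul_sum]
        exact Finset.sum_congr rfl fun b _ => by rw [smul_smul, div_eq_inv_mul]
      rw [h2, hgsum, smul_zero]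
    have hsumOL : ∑ b : S, (⟨algebraMap K L (g b / g c), hmemL b⟩ : OL) * z b = 0 := by
      have h3 := map_sum OL.subtype
        (fun b : S => (⟨algebraMap K L (g b / g c), hmemL b⟩ : OL) * z b) Finset.univ
      apply Subtype.ext
      have h4 : ((∑ b : S, (⟨algebraMap K L (g b / g c), hmemL b⟩ : OL) * z b : OL) : L)
          = ∑ b : S, algebraMap K L (g b / g c) * (z b : L) := by
        simpa using h3
      rw [h4]
      have h5 : ∑ b : S, algebraMap K L (g b / g c) * (z b : L) = 0 := by
        rw [← hsum']
        exact Finset.sum_congr rfl fun b _ => (Algebra.smul_def _ _).symm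
      simpa using h5
    have hsummand : ∀ b : S, resL (⟨algebraMap K L (g b / g c), hmemL b⟩ * z b)
        = resK (⟨g b / g c, (hOK _).mpr (hmem b)⟩ : OK) • (b : lL) := by
      intro b
      rw [map_mul, hz b, Algebra.smul_def]
      congr 1
      exact (hrescomp ⟨g b / g c, (hOK _).mpr (hmem b)⟩ (hmemL b)).symm
    have hres0 : ∑ b : S, (resK (⟨g b / g c, (hOK _).mpr (hmem b)⟩ : OK)) • (b : lL) = 0 := by
      calc ∑ b : S, (resK (⟨g b / g c, (hOK _).mpr (hmem b)⟩ : OK)) • (b : lL)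
          = ∑ b : S, resL (⟨algebraMap K L (g b / g c), hmemL b⟩ * z b) :=
            Finset.sum_congr rfl fun b _ => (hsummand b).symm
        _ = resL (∑ b : S, (⟨algebraMap K L (g b / g c), hmemL b⟩ : OL) * z b) :=
            (map_sum resL _ _).symm
        _ = resL 0 := by rw [hsumOL]
        _ = 0 := map_zero _
    have h5 := Fintype.linearIndependent_iff.mp hS
      (fun b => resK (⟨g b / g c, (hOK _).mpr (hmem b)⟩ : OK)) hres0 c
    have h6 : (⟨g c / g c, (hOK _).mpr (hmem c)⟩ : OK) = 1 :=
      Subtype.ext (by simp [div_self hgc])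
    rw [h6, map_one] at h5
    exact one_ne_zero h5
  have hranklL : Module.rank k lL ≤ p := rank_le hbound
  haveI : FiniteDimensional k lL :=
    Module.rank_lt_aleph0_iff.mp (hranklL.trans_lt (Cardinal.nat_lt_aleph0 p))
  have hfrle : Module.finrank k lL ≤ p := Module.finrank_le_of_rank_le hranklL
  -- the minimal polynomial of the residue of y
  set β : lL := resL ⟨y, hyOL⟩ with hβ
  have hroot : (Polynomial.aeval β) (X ^ p - C (resK u)) = 0 := by
    rw [map_sub, map_pow, aeval_X, aeval_C, hresy, sub_self]
  have hmonic : (X ^ p - C (resK u) : Polynomial k).Monic := monic_X_pow_sub_C _ hp.ne_zero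
  have hirr2 : Irreducible (X ^ p - C (resK u) : Polynomial k) :=
    X_pow_sub_C_irreducible_of_prime hp hubar
  have hint : IsIntegral k β := ⟨_, hmonic, hroot⟩
  have hmin : minpoly k β = X ^ p - C (resK u) :=
    (minpoly.eq_of_irreducible_of_monic hirr2 hroot hmonic).symm
  have hfradj : Module.finrank k (IntermediateField.adjoin k {β}) = p := by
    rw [IntermediateField.adjoin.finrank hint, hmin, natDegree_X_pow_sub_C]
  have htop : IntermediateField.adjoin k {β} = ⊤ := by
    refine IntermediateField.eq_of_le_of_finrank_le le_top ?_
    rw [IntermediateField.finrank_top', hfradj]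
    exact hfrle
  have hfr : Module.finrank k lL = p := by
    rw [← IntermediateField.finrank_top' (F := k) (E := lL), ← htop]
    exact hfradj
  -- pure inseparability
  have hpow : ∀ zz : lL, ∃ cz : k, algebraMap k lL cz = zz ^ p := by
    let S : Subalgebra k lL :=
      { carrier := {zz : lL | ∃ cz : k, algebraMap k lL cz = zz ^ p}
        mul_mem' := by
          rintro a b ⟨ca, hca⟩ ⟨cb, hcb⟩
          exact ⟨ca * cb, by rw [map_mul, hca, hcb, mul_pow]⟩
        one_mem' := ⟨1, by rw [map_one, one_pow]⟩
        add_mem' := by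
          rintro a b ⟨ca, hca⟩ ⟨cb, hcb⟩
          exact ⟨ca + cb, by rw [map_add, hca, hcb, add_pow_char]⟩
        zero_mem' := ⟨0, by rw [map_zero, zero_pow hp.ne_zero]⟩
        algebraMap_mem' := fun c => ⟨c ^ p, by rw [map_pow]⟩ }
    have hβS : β ∈ S := ⟨resK u, hresy.symm⟩
    have hadj : Algebra.adjoin k {β} = ⊤ := by
      rw [← IntermediateField.adjoin_simple_toSubalgebra_of_isAlgebraic hint.isAlgebraic, htop,
        IntermediateField.top_toSubalgebra]
    intro zz
    have hle : (⊤ : Subalgebra k lL) ≤ S := by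
      rw [← hadj]
      exact Algebra.adjoin_le (Set.singleton_subset_iff.mpr hβS)
    exact hle (Algebra.mem_top)
  have hPI : IsPurelyInseparable k lL := by
    rw [isPurelyInseparable_iff_pow_mem k p]
    intro zz
    obtain ⟨cz, hcz⟩ := hpow zz
    exact ⟨1, cz, by rw [pow_one]; exact hcz⟩
  exact ⟨key1, ⟨⟨y, hyOL⟩, rfl, hyunit, hresy⟩, hPI, hfr⟩
end

section
/- Let K be a discrete valued field of characteristic p with valuation v and α ∈ K optimal with v(α) < 0 and p | v(α). Write α = u/t^{m p^r} with u ∈ O_K^×, r > 0, gcd(m,p) = 1, t a uniformizer. Then the residue ū is not a p-th power in k. -/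
/-!
If `ū = d̄ ^ p`, put `s = t ^ (m * p ^ (r - 1))`, so that `α * s ^ p = u`. For `γ = -d / s`,
`(α + (γ ^ p - γ)) * s ^ p = (u - d ^ p) + d * s ^ (p - 1)` has positive valuation, i.e.
`v (α + (γ ^ p - γ)) > -v (s ^ p) = v α`, contradicting optimality.
-/

namespace AddValuation

variable {K : Type*} [Field K]

theorem map_eq_zero_of_mul_eq_one {Γ₀ : Type*} [LinearOrderedAddCommMonoidWithTop Γ₀]
    (v : AddValuation K Γ₀) {x y : K} (hx : 0 ≤ v x) (hy : 0 ≤ v y) (hxy : x * y = 1) :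
    v x = 0 := by
  have hsum : v x + v y = 0 := by rw [← v.map_mul, hxy, v.map_one]
  exact le_antisymm (hsum ▸ le_add_of_nonneg_right hy) hx

theorem exists_lt_map_add_pow_sub_self {Γ : Type*} [AddCommGroup Γ] [LinearOrder Γ]
    [IsOrderedAddMonoid Γ] (v : AddValuation K (WithTop Γ)) (p : ℕ) [Fact p.Prime]
    [CharP K p] {α s d : K} (hs : 0 < v s) (hd : 0 ≤ v d) (hunit : v (α * s ^ p) = 0)
    (hres : 0 < v (α * s ^ p - d ^ p)) :
    ∃ γ : K, v α < v (α + (γ ^ p - γ)) := by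
  have hp : 2 ≤ p := (Fact.out : p.Prime).two_le
  have hs0 : s ≠ 0 := by
    rintro rfl
    simp [zero_pow (by omega : p ≠ 0)] at hunit
  refine ⟨-(d / s), ?_⟩
  have hshift : (α + ((-(d / s)) ^ p - -(d / s))) * s ^ p =
      (α * s ^ p - d ^ p) + d * s ^ (p - 1) := by
    have hsp : s ^ p = s ^ (p - 1) * s := by rw [← pow_succ, Nat.sub_add_cancel (by omega)]
    rw [neg_pow, neg_one_pow_char, div_pow, hsp]
    field_simp
    ring
  have htail : 0 < v (d * s ^ (p - 1)) := by
    rw [v.map_mul, v.map_pow]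
    exact (nsmul_pos hs (by omega)).trans_le (le_add_of_nonneg_left hd)
  have hpos : v (α * s ^ p) < v ((α + ((-(d / s)) ^ p - -(d / s))) * s ^ p) := by
    rw [hunit, hshift]
    exact (lt_min hres htail).trans_le (v.map_add _ _)
  rwa [v.map_mul, v.map_mul, WithTop.add_lt_add_iff_right] at hpos
  exact v.top_iff.not.mpr (pow_ne_zero p hs0)

end AddValuation

theorem optimal_residue_not_pth_power_general
    {K : Type*} [Field K] (p : ℕ) [Fact p.Prime] [CharP K p]
    (v : K → WithTop ℤ)
    (hv0 : v 0 = ⊤) (hv1 : v 1 = 0)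
    (hvmul : ∀ x y : K, v (x * y) = v x + v y)
    (hvadd : ∀ x y : K, min (v x) (v y) ≤ v (x + y))
    (OK : Subring K) (hOK : ∀ x : K, x ∈ OK ↔ 0 ≤ v x)
    {k : Type*} [Field k] (resK : OK →+* k)
    (hresKsurj : Function.Surjective resK)
    (hresKker : ∀ x : OK, resK x = 0 ↔ 0 < v (x : K))
    (t : K) (ht : v t = (1 : ℤ))
    (α : K)
    (hopt : ∀ γ : K, v (α + (γ ^ p - γ)) ≤ v α)
    (u : OK) (hu : IsUnit u) (m r : ℕ) (hr : 0 < r) (hm : Nat.gcd m p = 1)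
    (hα : α = (u : K) / t ^ (m * p ^ r)) :
    ∀ c : k, c ^ p ≠ resK u := by
  intro c hc
  obtain ⟨d, rfl⟩ := hresKsurj c
  have hp : p.Prime := Fact.out
  let w := AddValuation.of v hv0 hv1 hvadd hvmul
  have hm0 : m ≠ 0 := by
    rintro rfl
    exact hp.one_lt.ne' (by simpa using hm)
  have ht0 : t ≠ 0 := by
    rintro rfl
    simp [hv0] at ht
  set s := t ^ (m * p ^ (r - 1))
  have hαs : α * s ^ p = u := by
    rw [hα, ← pow_mul, mul_assoc, ← pow_succ, Nat.sub_add_cancel hr]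
    exact div_mul_cancel₀ _ (pow_ne_zero _ ht0)
  have hs : 0 < w s := by
    have ht1 : 0 < w t := show 0 < v t from ht ▸ WithTop.coe_pos.mpr one_pos
    exact w.map_pow t _ ▸ nsmul_pos ht1 (mul_ne_zero hm0 (pow_ne_zero _ hp.ne_zero))
  have hunit : w (α * s ^ p) = 0 := by
    obtain ⟨u', hu'⟩ := isUnit_iff_exists_inv.mp hu
    rw [hαs]
    exact w.map_eq_zero_of_mul_eq_one ((hOK _).mp u.2) ((hOK _).mp u'.2)
      (by exact_mod_cast congrArg Subtype.val hu')
  have hres : 0 < w (α * s ^ p - d ^ p) := by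
    have hker := (hresKker (u - d ^ p)).mp (by rw [map_sub, map_pow, hc, sub_self])
    rw [hαs]
    exact_mod_cast hker
  obtain ⟨γ, hγ⟩ := w.exists_lt_map_add_pow_sub_self p hs ((hOK _).mp d.2) hunit hres
  exact not_le_of_gt hγ (hopt γ)

/-- Let `K` be a discrete valued field of characteristic `p` with
residue field `k`, uniformizer `t` and value group `ℤ`.  Let `α ∈ K` be optimal with
`v(α) < 0` and `p ∣ v(α)`, and write `α = u/t^{m·p^r}` with `u ∈ O_K^×`, `r > 0` and
`gcd(m, p) = 1`.  Then the residue `ū` is not a `p`-th power in `k`. -/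
theorem optimal_residue_not_pth_power
    {K : Type*} [Field K] (p : ℕ) [Fact p.Prime] [CharP K p]
    (v : K → WithTop ℤ)
    (hv0 : v 0 = ⊤) (hv1 : v 1 = 0)
    (hvmul : ∀ x y : K, v (x * y) = v x + v y)
    (hvadd : ∀ x y : K, min (v x) (v y) ≤ v (x + y))
    (hvsurj : ∀ j : ℤ, ∃ x : K, v x = (j : WithTop ℤ))
    (OK : Subring K) (hOK : ∀ x : K, x ∈ OK ↔ 0 ≤ v x)
    {k : Type*} [Field k] (resK : OK →+* k)
    (hresKsurj : Function.Surjective resK)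
    (hresKker : ∀ x : OK, resK x = 0 ↔ 0 < v (x : K))
    (t : K) (ht : v t = (1 : ℤ))
    (α : K) (hneg : v α < 0)
    (hopt : ∀ γ : K, v (α + (γ ^ p - γ)) ≤ v α)
    (hdvd : ∃ N : ℤ, v α = (N : WithTop ℤ) ∧ (p : ℤ) ∣ N)
    (u : OK) (hu : IsUnit u) (m r : ℕ) (hr : 0 < r) (hm : Nat.gcd m p = 1)
    (hα : α = (u : K) / t ^ (m * p ^ r)) :
    ∀ c : k, c ^ p ≠ resK u :=
  optimal_residue_not_pth_power_general p v hv0 hv1 hvmul hvadd OK hOK resK hresKsurj hresKker t ht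
    α hopt u hu m r hr hm hα
end

section
/- Let F be a discrete valued field of characteristic p, t a uniformizer, and suppose X satisfies X^p − X = (1/t^{p^l})(f(Z)^p − f(Z) − α₁^{p^N}) + α₂^{p^N} where f ∈ F^{{m,n}}[Z] is an {m,n}-special polynomial, m > n, l > m, N > m, and α₁, α₂ ∈ F. Then there exists g ∈ F^{{m−n−1, n}}[Z] such that Y := X − g(Z) satisfies Y^p − Y = h Z + η for some h ∈ F^{p^{m−n}} and η ∈ F^{p^{m−n−1}}; moreover for l sufficiently large, v(h) < min(0, v(η)). -/
/-!
Write `f = c + Σ_{i ≤ n} a_i Z^{p^i}` with `a_{n+1} = 0`, put `π = t⁻¹` and `u = π^{p^l}`, and let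
`℘(y) = y^p - y`. Then `℘(f) = ℘(c) + Σ_j (a_j^p - a_{j+1}) Z^{p^{j+1}} - a_0 Z`. Let `d_j` be the
`p^{j+1}`-th root of `a_j^p - a_{j+1}` and `e` the `p^{n+1}`-th root of `c^p - c - α₁^{p^N}`; they
lie in `F^{p^{m-n}}` and `F^{p^{m-n-1}}` because the `a_j` and `c` are `p^m`-th powers. As
`y^{p^k} - y = ℘(Σ_{i<k} y^{p^i})`, the term
`u (a_j^p - a_{j+1}) Z^{p^{j+1}} = (π^{p^{l-j-1}} d_j Z)^{p^{j+1}}` is congruent to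
`π^{p^{l-j-1}} d_j Z` modulo `℘`, and similarly for the constant term; subtracting the
corresponding `g(Z)` from `X` leaves `h Z + η` with `h = Σ_j π^{p^{l-j-1}} d_j - π^{p^l} a_0`
and `η = α₂^{p^N} + π^{p^{l-n-1}} e`.

Among `-a_0, d_0, …, d_{n-1}` some term is nonzero (otherwise all `a_j` vanish); the first one,
at index `s ≤ n`, contributes valuation `-p^{l-s} + O(1)` to `h`, which for large `l` is below the
valuation of every other term of `h` and of both terms of `η`.
-/

open Polynomial

/-- `F^{{m,n}}[Z]`, the set of `{m,n}`-special polynomials. -/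
def specialSet (F : Type*) [Field F] (p m n : ℕ) : Set (Polynomial F) :=
  {q | ∃ (c : F) (a : ℕ → F),
    (∃ y : F, c = y ^ p ^ m) ∧
    (∀ i ≤ n, ∃ y : F, a i = y ^ p ^ m) ∧
    (∃ i ≤ n, a i ≠ 0) ∧
    q = C c + ∑ i ∈ Finset.range (n + 1), C (a i) * X ^ p ^ i}

open Finset Filter

section PowerSubfield

variable (F : Type*) [Field F] (p : ℕ) [ExpChar F p]

/-- The subfield `F^{p^r}`. -/
abbrev powSubfield (r : ℕ) : Subfield F := (iterateFrobenius F p r).fieldRange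

variable {F p}

theorem mem_powSubfield {r : ℕ} {x : F} : x ∈ powSubfield F p r ↔ ∃ y, x = y ^ p ^ r := by
  simp [RingHom.mem_fieldRange, iterateFrobenius_def, eq_comm]

theorem pow_mem_powSubfield (y : F) (r : ℕ) : y ^ p ^ r ∈ powSubfield F p r :=
  RingHom.mem_fieldRange_self _ y

theorem powSubfield_antitone : Antitone (powSubfield F p) := by
  intro r s hrs x hx
  obtain ⟨y, rfl⟩ := mem_powSubfield.1 hx
  rw [← Nat.sub_add_cancel hrs, pow_add, pow_mul]
  exact pow_mem_powSubfield _ r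

theorem pow_mem_powSubfield_add {r : ℕ} {x : F} (hx : x ∈ powSubfield F p r) (k : ℕ) :
    x ^ p ^ k ∈ powSubfield F p (r + k) := by
  obtain ⟨y, rfl⟩ := mem_powSubfield.1 hx
  rw [← pow_mul, ← pow_add]
  exact pow_mem_powSubfield y _

theorem exists_mem_powSubfield_pow_eq {r k : ℕ} {x : F} (hx : x ∈ powSubfield F p (r + k)) :
    ∃ d ∈ powSubfield F p r, d ^ p ^ k = x := by
  obtain ⟨y, rfl⟩ := mem_powSubfield.1 hx
  exact ⟨y ^ p ^ r, pow_mem_powSubfield y r, by rw [← pow_mul, ← pow_add]⟩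

theorem pow_pow_mul_mem_powSubfield (x : F) {r s : ℕ} (hrs : r ≤ s) {y : F}
    (hy : y ∈ powSubfield F p r) : x ^ p ^ s * y ∈ powSubfield F p r :=
  mul_mem (powSubfield_antitone hrs (pow_mem_powSubfield x s)) hy

theorem exists_mem_powSubfield_pow_eq_pow_sub {r n : ℕ} {a : ℕ → F}
    (ha : ∀ j, a j ∈ powSubfield F p (r + n)) (ha_zero : ∀ j, n < j → a j = 0) :
    ∃ d : ℕ → F, (∀ j, d j ∈ powSubfield F p r) ∧ ∀ j, d j ^ p ^ (j + 1) = a j ^ p - a (j + 1) := by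
  have ha' (j : ℕ) : a j ∈ powSubfield F p (r + j) := by
    rcases le_or_gt j n with hj | hj
    · exact powSubfield_antitone (by omega) (ha j)
    · rw [ha_zero j hj]
      exact zero_mem _
  choose d hd_mem hd using fun j => exists_mem_powSubfield_pow_eq
    (sub_mem (by simpa only [pow_one, ← add_assoc] using pow_mem_powSubfield_add (ha' j) 1)
      (ha' (j + 1)) : a j ^ p - a (j + 1) ∈ powSubfield F p (r + (j + 1)))
  exact ⟨d, hd_mem, hd⟩

theorem exists_eq_of_mem_specialSet {m n : ℕ} {f : F[X]} (hf : f ∈ specialSet F p m n) :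
    ∃ (c : F) (a : ℕ → F), c ∈ powSubfield F p m ∧ (∀ i, a i ∈ powSubfield F p m) ∧
      (∀ i, n < i → a i = 0) ∧ (∃ i ≤ n, a i ≠ 0) ∧
      f = C c + ∑ i ∈ range (n + 1), C (a i) * X ^ p ^ i := by
  classical
  obtain ⟨c, a, hc, ha, ⟨i, hi, hai⟩, rfl⟩ := hf
  refine ⟨c, fun i => if i ≤ n then a i else 0, mem_powSubfield.2 hc, fun i => ?_,
    fun i hi => if_neg (by omega), ⟨i, hi, by simpa [hi] using hai⟩, ?_⟩
  · dsimp only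
    split_ifs with hi
    · exact mem_powSubfield.2 (ha i hi)
    · exact zero_mem _
  · refine congrArg _ (sum_congr rfl fun i hi => ?_)
    simp [Nat.lt_succ_iff.1 (mem_range.1 hi)]

end PowerSubfield

section ArtinSchreier

theorem pow_pow_sub_mul_pow_pow {M : Type*} [CommMonoid M] {p l k : ℕ} (x y : M) (hk : k ≤ l) :
    (x ^ p ^ (l - k) * y) ^ p ^ k = x ^ p ^ l * y ^ p ^ k := by
  rw [mul_pow, ← pow_mul, ← pow_add, Nat.sub_add_cancel hk]

variable {R : Type*} [CommRing R] (p : ℕ) [ExpChar R p]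

theorem pow_char_sub_self_sum_range_pow_char_pow (x : R) (k : ℕ) :
    (∑ i ∈ range k, x ^ p ^ i) ^ p - ∑ i ∈ range k, x ^ p ^ i = x ^ p ^ k - x := by
  simp_rw [sum_pow_char, ← pow_mul, ← pow_succ]
  rw [← sum_sub_distrib, sum_range_sub (fun i => x ^ p ^ i), pow_zero, pow_one]

theorem pow_char_sub_self_add_sum_mul_pow_char_pow (n : ℕ) (c Z : R) {a : ℕ → R}
    (ha : a (n + 1) = 0) :
    (c + ∑ i ∈ range (n + 1), a i * Z ^ p ^ i) ^ p - (c + ∑ i ∈ range (n + 1), a i * Z ^ p ^ i) =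
      c ^ p - c + ∑ j ∈ range (n + 1), (a j ^ p - a (j + 1)) * Z ^ p ^ (j + 1) - a 0 * Z := by
  have htel := sum_range_sub (fun i => a i * Z ^ p ^ i) (n + 1)
  simp only [ha, zero_mul, pow_zero, pow_one, sum_sub_distrib] at htel
  rw [add_pow_expChar, sum_pow_char]
  simp_rw [mul_pow, ← pow_mul, ← pow_succ, sub_mul, sum_sub_distrib]
  linear_combination htel

theorem artinSchreier_reduction (n : ℕ) {u c α ε Z : R} {a δ : ℕ → R} (ha : a (n + 1) = 0)
    (hδ : ∀ j ≤ n, δ j ^ p ^ (j + 1) = u * (a j ^ p - a (j + 1)))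
    (hε : ε ^ p ^ (n + 1) = u * (c ^ p - c - α)) :
    u * ((c + ∑ i ∈ range (n + 1), a i * Z ^ p ^ i) ^ p -
        (c + ∑ i ∈ range (n + 1), a i * Z ^ p ^ i) - α) -
      ((∑ j ∈ range (n + 1), ∑ i ∈ range (j + 1), (δ j * Z) ^ p ^ i +
          ∑ i ∈ range (n + 1), ε ^ p ^ i) ^ p -
        (∑ j ∈ range (n + 1), ∑ i ∈ range (j + 1), (δ j * Z) ^ p ^ i +
          ∑ i ∈ range (n + 1), ε ^ p ^ i)) =
      (∑ j ∈ range (n + 1), δ j - u * a 0) * Z + ε := by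
  have hterm : ∀ j ∈ range (n + 1),
      (∑ i ∈ range (j + 1), (δ j * Z) ^ p ^ i) ^ p - ∑ i ∈ range (j + 1), (δ j * Z) ^ p ^ i =
        u * ((a j ^ p - a (j + 1)) * Z ^ p ^ (j + 1)) - δ j * Z := by
    intro j hj
    rw [pow_char_sub_self_sum_range_pow_char_pow, mul_pow,
      hδ j (Nat.lt_succ_iff.1 (mem_range.1 hj)), mul_assoc]
  rw [pow_char_sub_self_add_sum_mul_pow_char_pow p n c Z ha, add_pow_expChar, sum_pow_char,
    add_sub_add_comm, ← sum_sub_distrib, sum_congr rfl hterm, sum_sub_distrib,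
    pow_char_sub_self_sum_range_pow_char_pow, hε, ← mul_sum, ← sum_mul]
  ring

end ArtinSchreier

section Reduction

variable {F : Type*} [Field F] {p : ℕ}

/-- The polynomial `g` with `g(Z) = Σ_{j ≤ n} Σ_{i ≤ j} (δ_j Z)^{p^i} + Σ_{i ≤ n} ε^{p^i}`,
written in the normal form of `specialSet`. -/
noncomputable def reductionPolynomial (p n : ℕ) (δ : ℕ → F) (ε : F) : F[X] :=
  C (∑ i ∈ range (n + 1), ε ^ p ^ i) +
    ∑ i ∈ range (n + 1), C (∑ j ∈ Ico i (n + 1), δ j ^ p ^ i) * X ^ p ^ i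

theorem reductionPolynomial_eq_sum (n : ℕ) (δ : ℕ → F) (ε : F) :
    reductionPolynomial p n δ ε =
      ∑ j ∈ range (n + 1), ∑ i ∈ range (j + 1), (C (δ j) * X) ^ p ^ i +
        ∑ i ∈ range (n + 1), C ε ^ p ^ i := by
  rw [reductionPolynomial, add_comm, map_sum]
  simp_rw [map_sum, sum_mul, C_pow, ← mul_pow, range_eq_Ico]
  rw [sum_Ico_Ico_comm]

theorem reductionPolynomial_mem_specialSet [ExpChar F p] {r n : ℕ} {δ : ℕ → F} {ε : F}
    (hδ : ∀ j ≤ n, δ j ∈ powSubfield F p r) (hε : ε ∈ powSubfield F p r) (hne : ∃ j ≤ n, δ j ≠ 0) :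
    reductionPolynomial p n δ ε ∈ specialSet F p r n := by
  classical
  set k := Nat.findGreatest (fun j => δ j ≠ 0) n
  have hk : δ k ≠ 0 := by
    obtain ⟨j, hjn, hj⟩ := hne
    exact Nat.findGreatest_spec (P := fun j => δ j ≠ 0) hjn hj
  refine ⟨_, _, mem_powSubfield.1 (sum_mem fun i _ => pow_mem hε _),
    fun i _ => mem_powSubfield.1
      (sum_mem fun j hj => pow_mem (hδ j (Nat.lt_succ_iff.1 (mem_Ico.1 hj).2)) _),
    ⟨k, Nat.findGreatest_le n, ?_⟩, rfl⟩
  rw [sum_eq_single_of_mem k (by simpa [Nat.lt_succ_iff] using Nat.findGreatest_le n)]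
  · exact pow_ne_zero _ hk
  · intro j hj hjk
    rw [not_not.1 (Nat.findGreatest_is_greatest (lt_of_le_of_ne (mem_Ico.1 hj).1 (Ne.symm hjk))
      (Nat.lt_succ_iff.1 (mem_Ico.1 hj).2)), zero_pow (expChar_pow_pos F p k).ne']

theorem aeval_reductionPolynomial_pow_char_sub {A : Type*} [CommRing A] [Algebra F A] [ExpChar A p]
    (Z : A) (n : ℕ) {u c α ε : F} {a δ : ℕ → F} (ha : a (n + 1) = 0)
    (hδ : ∀ j ≤ n, δ j ^ p ^ (j + 1) = u * (a j ^ p - a (j + 1)))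
    (hε : ε ^ p ^ (n + 1) = u * (c ^ p - c - α)) :
    algebraMap F A u * (aeval Z (C c + ∑ i ∈ range (n + 1), C (a i) * X ^ p ^ i) ^ p -
        aeval Z (C c + ∑ i ∈ range (n + 1), C (a i) * X ^ p ^ i) - algebraMap F A α) -
      (aeval Z (reductionPolynomial p n δ ε) ^ p - aeval Z (reductionPolynomial p n δ ε)) =
      algebraMap F A (∑ j ∈ range (n + 1), δ j - u * a 0) * Z + algebraMap F A ε := by
  have key := artinSchreier_reduction p n (u := algebraMap F A u) (c := algebraMap F A c)
    (α := algebraMap F A α) (ε := algebraMap F A ε) (Z := Z) (a := fun i => algebraMap F A (a i))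
    (δ := fun j => algebraMap F A (δ j)) (by simp [ha])
    (fun j hj => by simpa using congrArg (algebraMap F A) (hδ j hj))
    (by simpa using congrArg (algebraMap F A) hε)
  rw [reductionPolynomial_eq_sum]
  simpa using key

end Reduction

section Nondegeneracy

variable {R : Type*} [CommRing R] {p n : ℕ} {a d : ℕ → R}

theorem exists_ne_zero_of_pow_eq_pow_sub [IsReduced R] (hp : p ≠ 0)
    (hd : ∀ j ≤ n, d j ^ p ^ (j + 1) = a j ^ p - a (j + 1)) (ha : a (n + 1) = 0)
    (hne : ∃ i ≤ n, a i ≠ 0) : ∃ j ≤ n, d j ≠ 0 := by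
  by_contra! hd0
  obtain ⟨i, hi, hai⟩ := hne
  refine hai (Nat.decreasingInduction (motive := fun k _ => a k = 0) (fun k hk hk1 => ?_) ha
    (hi.trans n.le_succ))
  have hk' := hd k (Nat.lt_succ_iff.1 hk)
  rw [hd0 k (Nat.lt_succ_iff.1 hk), hk1, zero_pow (pow_ne_zero _ hp), sub_zero] at hk'
  exact eq_zero_of_pow_eq_zero hk'.symm

theorem ne_zero_or_exists_ne_zero_of_pow_eq_pow_sub (hp : p ≠ 0)
    (hd : ∀ j ≤ n, d j ^ p ^ (j + 1) = a j ^ p - a (j + 1)) (hne : ∃ i ≤ n, a i ≠ 0) :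
    a 0 ≠ 0 ∨ ∃ j < n, d j ≠ 0 := by
  by_contra! h
  obtain ⟨i, hi, hai⟩ := hne
  suffices ∀ k ≤ n, a k = 0 from hai (this i hi)
  intro k
  induction k with
  | zero => exact fun _ => h.1
  | succ k ih =>
    intro hk
    have hk' := hd k (by omega)
    rw [h.2 k (by omega), ih (by omega), zero_pow (pow_ne_zero _ hp), zero_pow hp] at hk'
    linear_combination hk'

end Nondegeneracy

theorem WithTop.exists_coe_le_of_finset {ι : Type*} (s : Finset ι) (f : ι → WithTop ℤ) :
    ∃ W : ℤ, ∀ i ∈ s, (W : WithTop ℤ) ≤ f i := by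
  have (i : ι) : ∀ᶠ W : ℤ in atBot, (W : WithTop ℤ) ≤ f i := by
    cases f i with
    | top => exact .of_forall fun _ => le_top
    | coe z => exact (eventually_le_atBot z).mono fun _ h => WithTop.coe_le_coe.2 h
  exact ((eventually_all_finset s).2 fun i _ => this i).exists

theorem eventually_lt_pow_sub_pow {p s r : ℕ} (hp : 1 < p) (hsr : s < r) (B : ℤ) :
    ∀ᶠ l in atTop, B < (p : ℤ) ^ (l - s) - (p : ℤ) ^ (l - r) := by
  refine eventually_atTop.2 ⟨r + B.toNat, fun l hl => ?_⟩
  have hgrow : ((l - r : ℕ) : ℤ) < (p : ℤ) ^ (l - r) := by exact_mod_cast Nat.lt_pow_self hp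
  have hmul : (p : ℤ) ^ (l - r) * p ≤ (p : ℤ) ^ (l - s) := by
    rw [← pow_succ]
    exact pow_le_pow_right₀ (by exact_mod_cast hp.le) (by omega)
  have hp' : (2 : ℤ) ≤ p := by exact_mod_cast hp
  have hpos : (0 : ℤ) ≤ (p : ℤ) ^ (l - r) := by positivity
  have hB : B ≤ ((l - r : ℕ) : ℤ) := by omega
  nlinarith

namespace AddValuation

variable {F : Type*} [Field F] (v : AddValuation F (WithTop ℤ)) {t : F}

theorem map_inv_pow_mul (ht : v t = 1) (n : ℕ) (y : F) :
    v (t⁻¹ ^ n * y) = ((-n : ℤ) : WithTop ℤ) + v y := by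
  rw [map_mul, map_pow, map_inv, ht]
  norm_cast
  simp

theorem eventually_map_sum_inv_pow_mul_eq (ht : v t = 1) {p : ℕ} (hp : 1 < p) {c : ℕ → F}
    {s K : ℕ} (hsK : s < K) (hs : c s ≠ 0) (hzero : ∀ k < s, c k = 0) :
    ∀ᶠ l in atTop, v (∑ k ∈ range K, t⁻¹ ^ p ^ (l - k) * c k) = v (t⁻¹ ^ p ^ (l - s) * c s) := by
  obtain ⟨W, hW⟩ := WithTop.exists_coe_le_of_finset (range K) fun k => v (c k)
  obtain ⟨w, hw⟩ := WithTop.ne_top_iff_exists.1 ((v.ne_top_iff).2 hs)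
  filter_upwards [eventually_lt_pow_sub_pow hp s.lt_succ_self (w - W)] with l hl
  have hrest : ((-(p : ℤ) ^ (l - (s + 1)) + W : ℤ) : WithTop ℤ) ≤
      v (∑ k ∈ (range K).erase s, t⁻¹ ^ p ^ (l - k) * c k) := by
    refine v.map_le_sum fun k hk => ?_
    obtain ⟨hks, hkK⟩ := mem_erase.1 hk
    rcases lt_or_gt_of_ne hks with hlt | hgt
    · simp [hzero k hlt]
    · have hpow : (p : ℤ) ^ (l - k) ≤ (p : ℤ) ^ (l - (s + 1)) :=
        pow_le_pow_right₀ (by exact_mod_cast hp.le) (by omega)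
      rw [map_inv_pow_mul v ht, WithTop.coe_add]
      refine add_le_add (WithTop.coe_le_coe.2 ?_) (hW k hkK)
      push_cast
      linarith
  rw [← add_sum_erase _ _ (mem_range.2 hsK)]
  refine v.map_add_eq_of_lt_left (lt_of_lt_of_le ?_ hrest)
  rw [map_inv_pow_mul v ht, ← hw]
  norm_cast
  push_cast
  linarith

theorem eventually_map_sum_inv_pow_mul_lt (ht : v t = 1) {p : ℕ} (hp : 1 < p) {c : ℕ → F}
    {r K : ℕ} (hrK : r ≤ K) (hc : ∃ k < r, c k ≠ 0) (β e : F) :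
    ∀ᶠ l in atTop, v (∑ k ∈ range K, t⁻¹ ^ p ^ (l - k) * c k) < 0 ∧
      v (∑ k ∈ range K, t⁻¹ ^ p ^ (l - k) * c k) < v (β + t⁻¹ ^ p ^ (l - r) * e) := by
  classical
  obtain ⟨k, hkr, hk⟩ := hc
  have hex : ∃ k, c k ≠ 0 := ⟨k, hk⟩
  have hsr : Nat.find hex < r := (Nat.find_min' hex hk).trans_lt hkr
  obtain ⟨W, hW⟩ := WithTop.exists_coe_le_of_finset {β, e} v
  obtain ⟨w, hw⟩ := WithTop.ne_top_iff_exists.1 ((v.ne_top_iff).2 (Nat.find_spec hex))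
  filter_upwards [eventually_map_sum_inv_pow_mul_eq v ht hp (hsr.trans_le hrK) (Nat.find_spec hex)
      fun k hk => not_not.1 (Nat.find_min hex hk),
    eventually_lt_pow_sub_pow hp hsr (w - min W 0)] with l hsum hl
  have hpos : 0 ≤ (p : ℤ) ^ (l - r) := by positivity
  have hlt : -(p : ℤ) ^ (l - Nat.find hex) + w < -(p : ℤ) ^ (l - r) + min W 0 := by linarith
  rw [hsum, map_inv_pow_mul v ht, ← hw, ← WithTop.coe_add]
  push_cast
  refine ⟨WithTop.coe_lt_coe.2 (by linarith [min_le_right W 0]), v.map_lt_add ?_ ?_⟩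
  · exact (WithTop.coe_lt_coe.2 (by linarith [min_le_left W 0])).trans_le (hW β (by simp))
  · rw [map_inv_pow_mul v ht]
    refine (WithTop.coe_lt_coe.2
      (show _ < -(p : ℤ) ^ (l - r) + W by linarith [min_le_left W 0])).trans_le ?_
    rw [WithTop.coe_add]
    push_cast
    exact add_le_add le_rfl (hW e (by simp))

theorem eventually_map_sum_sub_lt (ht : v t = 1) {p n : ℕ} (hp : 1 < p) {a d : ℕ → F}
    (hd : ∀ j ≤ n, d j ^ p ^ (j + 1) = a j ^ p - a (j + 1)) (ha : ∃ i ≤ n, a i ≠ 0) (β e : F) :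
    ∀ᶠ l in atTop,
      v (∑ j ∈ range (n + 1), t⁻¹ ^ p ^ (l - (j + 1)) * d j - t⁻¹ ^ p ^ l * a 0) < 0 ∧
      v (∑ j ∈ range (n + 1), t⁻¹ ^ p ^ (l - (j + 1)) * d j - t⁻¹ ^ p ^ l * a 0) <
        v (β + t⁻¹ ^ p ^ (l - (n + 1)) * e) := by
  let c : ℕ → F := fun | 0 => -a 0 | k + 1 => d k
  have hc : ∃ k < n + 1, c k ≠ 0 := by
    rcases ne_zero_or_exists_ne_zero_of_pow_eq_pow_sub (by omega) hd ha with h0 | ⟨j, hj, hdj⟩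
    · exact ⟨0, n.succ_pos, neg_ne_zero.2 h0⟩
    · exact ⟨j + 1, by omega, hdj⟩
  have hsum (l : ℕ) : ∑ k ∈ range (n + 2), t⁻¹ ^ p ^ (l - k) * c k =
      ∑ j ∈ range (n + 1), t⁻¹ ^ p ^ (l - (j + 1)) * d j - t⁻¹ ^ p ^ l * a 0 := by
    rw [sum_range_succ']
    simp [c, sub_eq_add_neg]
  simpa only [hsum] using v.eventually_map_sum_inv_pow_mul_lt ht hp (Nat.le_succ _) hc β e

end AddValuation

theorem special_reduction_general
    {F A : Type*} [Field F] [CommRing A] [IsDomain A] [Algebra F A]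
    (p : ℕ) [Fact p.Prime] [CharP F p]
    (v : F → WithTop ℤ)
    (hv0 : v 0 = ⊤) (hv1 : v 1 = 0)
    (hvmul : ∀ x y : F, v (x * y) = v x + v y)
    (hvadd : ∀ x y : F, min (v x) (v y) ≤ v (x + y))
    (t : F) (ht : v t = (1 : ℤ))
    (m n : ℕ) (hmn : n < m) (N : ℕ) (hN : m < N) (α₁ α₂ : F)
    (f : Polynomial F) (hf : f ∈ specialSet F p m n)
    (Z : A) :
    ∃ l₀ : ℕ, ∀ l : ℕ, m < l → ∀ X : A,
      X ^ p - X = algebraMap F A (1 / t ^ p ^ l) *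
          ((aeval Z f) ^ p - aeval Z f - algebraMap F A (α₁ ^ p ^ N))
        + algebraMap F A (α₂ ^ p ^ N) →
      ∃ g ∈ specialSet F p (m - n - 1) n, ∃ h η : F,
        (∃ y : F, h = y ^ p ^ (m - n)) ∧ (∃ y : F, η = y ^ p ^ (m - n - 1)) ∧
        (X - aeval Z g) ^ p - (X - aeval Z g)
          = algebraMap F A h * Z + algebraMap F A η ∧
        (l₀ ≤ l → v h < 0 ∧ v h < v η) := by
  have hp : 1 < p := (Fact.out : p.Prime).one_lt
  have : CharP A p := charP_of_injective_algebraMap (algebraMap F A).injective p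
  have ht0 : t ≠ 0 := by
    rintro rfl
    simp [hv0] at ht
  obtain ⟨c, a, hc, ha, ha_zero, ha_ne, rfl⟩ := exists_eq_of_mem_specialSet hf
  obtain ⟨d, hd_mem, hd⟩ := exists_mem_powSubfield_pow_eq_pow_sub (r := m - n)
    (fun j => by rw [Nat.sub_add_cancel hmn.le]; exact ha j) ha_zero
  obtain ⟨e, he_mem, he⟩ := exists_mem_powSubfield_pow_eq (r := m - n - 1) (k := n + 1)
    (x := c ^ p - c - α₁ ^ p ^ N) <| by
      rw [show m - n - 1 + (n + 1) = m by omega]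
      exact sub_mem (sub_mem (pow_mem hc p) hc)
        (powSubfield_antitone hN.le (pow_mem_powSubfield _ _))
  obtain ⟨l₀, hl₀⟩ := eventually_atTop.1 <|
    (AddValuation.of v hv0 hv1 hvadd hvmul).eventually_map_sum_sub_lt ht hp (fun j _ => hd j) ha_ne
      (α₂ ^ p ^ N) e
  refine ⟨l₀, fun l hl X hX => ?_⟩
  set δ : ℕ → F := fun j => t⁻¹ ^ p ^ (l - (j + 1)) * d j
  set ε := t⁻¹ ^ p ^ (l - (n + 1)) * e
  have hε_mem : ε ∈ powSubfield F p (m - n - 1) := pow_pow_mul_mem_powSubfield _ (by omega) he_mem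
  have hg : reductionPolynomial p n δ ε ∈ specialSet F p (m - n - 1) n := by
    obtain ⟨j, hj, hdj⟩ := exists_ne_zero_of_pow_eq_pow_sub (by omega) (fun j _ => hd j)
      (ha_zero _ n.lt_succ_self) ha_ne
    exact reductionPolynomial_mem_specialSet (fun j _ => pow_pow_mul_mem_powSubfield _ (by omega)
        (powSubfield_antitone (by omega) (hd_mem j))) hε_mem
      ⟨j, hj, mul_ne_zero (pow_ne_zero _ (inv_ne_zero ht0)) hdj⟩
  have hh : ∑ j ∈ range (n + 1), δ j - t⁻¹ ^ p ^ l * a 0 ∈ powSubfield F p (m - n) :=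
    sub_mem (sum_mem fun j hj => pow_pow_mul_mem_powSubfield _
        (by have := mem_range.1 hj; omega) (hd_mem j))
      (pow_pow_mul_mem_powSubfield _ (by omega) (powSubfield_antitone (Nat.sub_le m n) (ha 0)))
  have hη : α₂ ^ p ^ N + ε ∈ powSubfield F p (m - n - 1) :=
    add_mem (powSubfield_antitone (by omega) (pow_mem_powSubfield _ _)) hε_mem
  have key := aeval_reductionPolynomial_pow_char_sub Z n (δ := δ) (ε := ε)
    (ha_zero _ n.lt_succ_self)
    (fun j _ => (pow_pow_sub_mul_pow_pow _ _ (by omega)).trans (by rw [hd]))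
    ((pow_pow_sub_mul_pow_pow _ _ (by omega)).trans (by rw [he]))
  refine ⟨_, hg, _, _, mem_powSubfield.1 hh, mem_powSubfield.1 hη, ?_, hl₀ l⟩
  rw [one_div, ← inv_pow] at hX
  rw [sub_pow_expChar, map_add]
  linear_combination hX + key

/-- Let `F` be a discrete valued field of characteristic `p` with
uniformizer `t`, let `f ∈ F^{{m,n}}[Z]` with `m > n`, let `N > m` and `α₁, α₂ ∈ F`, and
let `Z` be transcendental over `F` in an integral domain extension `A`.  There is a
bound `l₀` such that: for any `l > m`, if `X ∈ A` satisfies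
`X^p − X = (1/t^{p^l})·(f(Z)^p − f(Z) − α₁^{p^N}) + α₂^{p^N}`, then there exists
`g ∈ F^{{m−n−1, n}}[Z]` such that `Y := X − g(Z)` satisfies `Y^p − Y = h·Z + η`
for some `h ∈ F^{p^{m−n}}` and `η ∈ F^{p^{m−n−1}}`; moreover if `l ≥ l₀` (i.e. `l` is
sufficiently large) then in addition `v(h) < 0` and `v(h) < v(η)`. -/
theorem special_reduction
    {F A : Type*} [Field F] [CommRing A] [IsDomain A] [Algebra F A]
    (p : ℕ) [Fact p.Prime] [CharP F p]
    (v : F → WithTop ℤ)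
    (hv0 : v 0 = ⊤) (hv1 : v 1 = 0)
    (hvmul : ∀ x y : F, v (x * y) = v x + v y)
    (hvadd : ∀ x y : F, min (v x) (v y) ≤ v (x + y))
    (hvsurj : ∀ j : ℤ, ∃ x : F, v x = (j : WithTop ℤ))
    (t : F) (ht : v t = (1 : ℤ))
    (m n : ℕ) (hmn : n < m) (N : ℕ) (hN : m < N) (α₁ α₂ : F)
    (f : Polynomial F) (hf : f ∈ specialSet F p m n)
    (Z : A) (hZ : Transcendental F Z) :
    ∃ l₀ : ℕ, ∀ l : ℕ, m < l → ∀ X : A,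
      X ^ p - X = algebraMap F A (1 / t ^ p ^ l) *
          ((aeval Z f) ^ p - aeval Z f - algebraMap F A (α₁ ^ p ^ N))
        + algebraMap F A (α₂ ^ p ^ N) →
      ∃ g ∈ specialSet F p (m - n - 1) n, ∃ h η : F,
        (∃ y : F, h = y ^ p ^ (m - n)) ∧ (∃ y : F, η = y ^ p ^ (m - n - 1)) ∧
        (X - aeval Z g) ^ p - (X - aeval Z g)
          = algebraMap F A h * Z + algebraMap F A η ∧
        (l₀ ≤ l → v h < 0 ∧ v h < v η) :=
  special_reduction_general p v hv0 hv1 hvmul hvadd t ht m n hmn N hN α₁ α₂ f hf Z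
end
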